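/- Let C be a small category and X : P(Fin n) ⟶ C a strongly cocartesian n-cube; write K = X(∅) and k_i = X(∅ ⊆ {i}). Let 𝒦 : P(Fin n) ⟶ C be the cube 𝒦(U) = ∐_{i ∈ Fin n} σ_U(i) (with σ_U(i) = X({i}) if i ∈ U and σ_U(i) = K otherwise, and structure maps induced by the k_i), and let κ_U : 𝒦(U) ⟶ X(U) be the map whose i-th component is X({i} ⊆ U) if i ∈ U and X(∅ ⊆ U) otherwise. In the functor category [C, Type], with y(c) = C(c, −) the corepresentable functor, let γ^X : colim_{∅ ≠ U} y(X(U)) ⟶ y(K) and w^X : colim_{∅ ≠ U} y(𝒦(U)) ⟶ y(𝒦(∅)) = y(K)^{× n} be the cocartesian gap maps of the cubes obtained by applying y to X and to 𝒦 respectively. Then the square whose vertical maps are γ^X and w^X, whose top map colim_{∅ ≠ U} y(X(U)) ⟶ colim_{∅ ≠ U} y(𝒦(U)) is induced by the maps y(κ_U), and whose bottom map is the diagonal Δ : y(K) ⟶ y(K)^{× n}, is a pullback square in [C, Type]. -/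

import Mathlib

open CategoryTheory Limits Opposite

namespace GoodwillieStmt16

set_option linter.unusedSectionVars false

variable {C : Type} [SmallCategory C] [HasFiniteCoproducts C] {n : ℕ}

/-- `σ_U(i)` is `X({i})` if `i ∈ U`, and `K = X(∅)` otherwise. -/
def sig (X : Finset (Fin n) ⥤ C) (U : Finset (Fin n)) (i : Fin n) : C :=
  if i ∈ U then X.obj {i} else X.obj ∅

/-- The component `σ_U(i) ⟶ σ_V(i)` of the structure maps of the cube `𝒦`:
`k_i = X(∅ ⊆ {i})` on the coordinates added, identities elsewhere. -/
def cmap (X : Finset (Fin n) ⥤ C) {U V : Finset (Fin n)} (h : U ≤ V) (i : Fin n) :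
    sig X U i ⟶ sig X V i :=
  if hU : i ∈ U then eqToHom (by simp [sig, hU, h hU])
  else if hV : i ∈ V then
    eqToHom (show sig X U i = X.obj ∅ by simp [sig, hU]) ≫
      X.map (homOfLE (Finset.empty_subset {i})) ≫
      eqToHom (show X.obj {i} = sig X V i by simp [sig, hV])
  else eqToHom (by simp [sig, hU, hV])

lemma cmap_refl (X : Finset (Fin n) ⥤ C) {U : Finset (Fin n)} (h : U ≤ U) (i : Fin n) :
    cmap X h i = 𝟙 _ := by
  by_cases hU : i ∈ U <;> simp [cmap, hU]

lemma cmap_trans (X : Finset (Fin n) ⥤ C) {U V W : Finset (Fin n)} (h : U ≤ V) (h' : V ≤ W)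
    (i : Fin n) : cmap X h i ≫ cmap X h' i = cmap X (h.trans h') i := by
  by_cases hU : i ∈ U
  · have hV : i ∈ V := h hU
    have hW : i ∈ W := h' hV
    simp [cmap, hU, hV, hW]
  · by_cases hV : i ∈ V
    · have hW : i ∈ W := h' hV
      simp [cmap, hU, hV, hW]
    · by_cases hW : i ∈ W
      · simp [cmap, hU, hV, hW]
      · simp [cmap, hU, hV, hW]

/-- The cube `𝒦(U) = ∐ᵢ σ_U(i)` associated to the strongly cocartesian cube `X`. -/
noncomputable def KF (X : Finset (Fin n) ⥤ C) : Finset (Fin n) ⥤ C where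
  obj U := ∐ fun i => sig X U i
  map {U V} h := Limits.Sigma.map (cmap X (leOfHom h))
  map_id U := by
    ext i
    simp [cmap_refl]
  map_comp {U V W} f g := by
    rw [Limits.Sigma.map_comp_map]
    congr 1
    funext i
    rw [cmap_trans]

/-- The `i`-th component `σ_U(i) ⟶ X(U)` of the comparison map `κ_U : 𝒦(U) ⟶ X(U)`. -/
def bmap (X : Finset (Fin n) ⥤ C) (U : Finset (Fin n)) (i : Fin n) :
    sig X U i ⟶ X.obj U :=
  if h : i ∈ U then
    eqToHom (show sig X U i = X.obj {i} by simp [sig, h]) ≫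
      X.map (homOfLE (Finset.singleton_subset_iff.mpr h))
  else
    eqToHom (show sig X U i = X.obj ∅ by simp [sig, h]) ≫
      X.map (homOfLE (Finset.empty_subset U))

lemma cmap_bmap (X : Finset (Fin n) ⥤ C) {U V : Finset (Fin n)} (h : U ≤ V) (i : Fin n) :
    cmap X h i ≫ bmap X V i = bmap X U i ≫ X.map (homOfLE h) := by
  by_cases hU : i ∈ U
  · have hV : i ∈ V := h hU
    simp [cmap, bmap, hU, hV, ← Functor.map_comp, homOfLE_comp]
  · by_cases hV : i ∈ V
    · simp [cmap, bmap, hU, hV, ← Functor.map_comp, homOfLE_comp]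
    · simp [cmap, bmap, hU, hV, ← Functor.map_comp, homOfLE_comp]

/-- The natural comparison `κ : 𝒦 ⟶ X`, with `κ_U` given on the `i`-th summand by
`X({i} ⊆ U)` for `i ∈ U` and by `X(∅ ⊆ U)` otherwise. -/
noncomputable def kappa (X : Finset (Fin n) ⥤ C) : KF X ⟶ X where
  app U := Sigma.desc (bmap X U)
  naturality {U V} h := by
    dsimp only [KF]
    ext i
    simp [cmap_bmap]
    congr 2

/-- The poset of nonempty subsets of `Fin n`. -/
abbrev D (n : ℕ) := {U : Finset (Fin n) // U.Nonempty}

/-- The inclusion of the poset of nonempty subsets into all subsets. -/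
def incl (n : ℕ) : D n ⥤ Finset (Fin n) :=
  Monotone.functor (f := (Subtype.val : D n → Finset (Fin n))) fun _ _ h => h

/-- The contravariant cube of corepresentables `U ↦ y(Y(U))` restricted to nonempty subsets. -/
def diag (Y : Finset (Fin n) ⥤ C) : (D n)ᵒᵖ ⥤ (C ⥤ Type) :=
  (incl n).op ⋙ Y.op ⋙ coyoneda

/-- The cocone on `diag Y` with vertex `y(Y(∅))` whose legs are induced by `Y(∅ ⊆ U)`. -/
def gapCocone (Y : Finset (Fin n) ⥤ C) : Cocone (diag Y) where
  pt := coyoneda.obj (op (Y.obj ∅))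
  ι :=
    { app := fun U => coyoneda.map ((Y.map (homOfLE (Finset.empty_subset U.unop.val))).op)
      naturality := fun U V h => by
        dsimp [diag]
        erw [Category.comp_id, ← Functor.map_comp, ← op_comp, ← Functor.map_comp]
        congr 2 }

/-- The cocartesian gap map `colim_{∅ ≠ U} y(Y(U)) ⟶ y(Y(∅))`. -/
noncomputable def gap (Y : Finset (Fin n) ⥤ C) :
    colimit (diag Y) ⟶ coyoneda.obj (op (Y.obj ∅)) :=
  colimit.desc _ (gapCocone Y)

/-- The comparison map `y(𝒦(∅)) ⟶ y(K)^{× n}` identifying `y` of the `n`-fold coproduct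
of `K` with the `n`-fold product of `y(K)`. -/
noncomputable def cmp (X : Finset (Fin n) ⥤ C) :
    coyoneda.obj (op ((KF X).obj ∅)) ⟶ ∏ᶜ fun _ : Fin n => coyoneda.obj (op (X.obj ∅)) :=
  Pi.lift fun i => coyoneda.map
    ((eqToHom (show X.obj ∅ = sig X ∅ i by simp [sig]) ≫ Sigma.ι (fun j => sig X ∅ j) i).op)

/-- The map `w^X : colim_{∅ ≠ U} y(𝒦(U)) ⟶ y(K)^{× n}`, the cocartesian gap map of `y ∘ 𝒦`
followed by the identification `y(𝒦(∅)) = y(K)^{× n}`. -/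
noncomputable def wMap (X : Finset (Fin n) ⥤ C) :
    colimit (diag (KF X)) ⟶ ∏ᶜ fun _ : Fin n => coyoneda.obj (op (X.obj ∅)) :=
  gap (KF X) ≫ cmp X

/-- The top map `colim_{∅ ≠ U} y(X(U)) ⟶ colim_{∅ ≠ U} y(𝒦(U))`, induced by the maps
`y(κ_U)`. -/
noncomputable def topMap (X : Finset (Fin n) ⥤ C) : colimit (diag X) ⟶ colimit (diag (KF X)) :=
  colimMap (Functor.whiskerLeft (incl n).op (Functor.whiskerRight (NatTrans.op (kappa X)) coyoneda))

/-- The `n`-fold diagonal `Δ : y(K) ⟶ y(K)^{× n}`. -/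
noncomputable def diagMap (X : Finset (Fin n) ⥤ C) :
    coyoneda.obj (op (X.obj ∅)) ⟶ ∏ᶜ fun _ : Fin n => coyoneda.obj (op (X.obj ∅)) :=
  Pi.lift fun _ => 𝟙 _


section AuxHelpers

variable (X : Finset (Fin n) ⥤ C)

lemma map_homOfLE_comp {A B D : Finset (Fin n)} (h : A ≤ B) (h' : B ≤ D) :
    X.map (homOfLE h) ≫ X.map (homOfLE h') = X.map (homOfLE (h.trans h')) := by
  rw [← X.map_comp]; rfl

lemma map_homOfLE_refl (A : Finset (Fin n)) (h : A ≤ A) :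
    X.map (homOfLE h) = 𝟙 _ := by
  rw [show homOfLE h = 𝟙 A from rfl, X.map_id]

lemma isPushout_congr {A B P Q A' B' P' Q' : Finset (Fin n)}
    (hA : A = A') (hB : B = B') (hP : P = P') (hQ : Q = Q')
    {h1 : A ≤ B} {h2 : A ≤ P} {h3 : B ≤ Q} {h4 : P ≤ Q}
    {h1' : A' ≤ B'} {h2' : A' ≤ P'} {h3' : B' ≤ Q'} {h4' : P' ≤ Q'}
    (H : IsPushout (X.map (homOfLE h1)) (X.map (homOfLE h2))
      (X.map (homOfLE h3)) (X.map (homOfLE h4))) :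
    IsPushout (X.map (homOfLE h1')) (X.map (homOfLE h2'))
      (X.map (homOfLE h3')) (X.map (homOfLE h4')) := by
  subst hA hB hP hQ; exact H

variable (hX : ∀ (U : Finset (Fin n)) (i j : Fin n), i ≠ j → i ∉ U → j ∉ U →
  IsPushout (X.map (homOfLE (Finset.subset_insert i U)))
    (X.map (homOfLE (Finset.subset_insert j U)))
    (X.map (homOfLE (Finset.subset_insert j (insert i U))))
    (X.map (homOfLE (Finset.insert_subset_insert j (Finset.subset_insert i U)))))

include hX in
lemma pushout_rect :
    ∀ (B A : Finset (Fin n)) (hAB : A ≤ B) (i : Fin n), i ∉ B →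
    IsPushout (X.map (homOfLE (Finset.subset_insert i A)))
      (X.map (homOfLE hAB))
      (X.map (homOfLE (Finset.insert_subset_insert i hAB)))
      (X.map (homOfLE (Finset.subset_insert i B))) := by
  intro B
  induction B using Finset.strongInduction with
  | _ B IH =>
    intro A hAB i hiB
    rcases eq_or_ne A B with rfl | hne
    · have e1 : X.map (homOfLE hAB) = 𝟙 _ := map_homOfLE_refl X _ _
      have e2 : X.map (homOfLE (Finset.insert_subset_insert i hAB)) = 𝟙 _ :=
        map_homOfLE_refl X _ _
      rw [e1, e2]
      exact IsPushout.of_vert_isIso ⟨by rw [Category.comp_id, Category.id_comp]⟩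
    · have : ∃ j, j ∈ B ∧ j ∉ A := by
        by_contra h
        push_neg at h
        exact hne (le_antisymm hAB h)
      obtain ⟨j, hjB, hjA⟩ := this
      have hinsert : insert j (B.erase j) = B := Finset.insert_erase hjB
      have hAB' : A ≤ B.erase j := fun x hx =>
        Finset.mem_erase.2 ⟨fun hxy => hjA (hxy ▸ hx), hAB hx⟩
      have hij : i ≠ j := fun h => hiB (h ▸ hjB)
      have hiB' : i ∉ B.erase j := fun h => hiB (Finset.mem_of_mem_erase h)
      have hjB' : j ∉ B.erase j := Finset.notMem_erase _ _
      have top := IH (B.erase j) (Finset.erase_ssubset hjB) A hAB' i hiB'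
      have bot : IsPushout (X.map (homOfLE (Finset.subset_insert i (B.erase j))))
          (X.map (homOfLE (show B.erase j ≤ B from Finset.erase_subset _ _)))
          (X.map (homOfLE (show insert i (B.erase j) ≤ insert i B from
            Finset.insert_subset_insert i (Finset.erase_subset _ _))))
          (X.map (homOfLE (Finset.subset_insert i B))) := by
        refine isPushout_congr X rfl rfl hinsert ?_ (hX (B.erase j) i j hij hiB' hjB')
        rw [Finset.insert_comm, hinsert]
      have := top.paste_vert bot
      rw [map_homOfLE_comp, map_homOfLE_comp] at this
      exact this

include hX in
lemma exists_unique_desc {c : C} :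
    ∀ (U : Finset (Fin n)), U.Nonempty → ∀ (g : ∀ i ∈ U, (X.obj {i} ⟶ c))
    (f₀ : X.obj ∅ ⟶ c),
    (∀ i (hi : i ∈ U), X.map (homOfLE (Finset.empty_subset {i})) ≫ g i hi = f₀) →
    ∃! f : X.obj U ⟶ c, ∀ i (hi : i ∈ U),
      X.map (homOfLE (Finset.singleton_subset_iff.mpr hi)) ≫ f = g i hi := by
  intro U
  induction U using Finset.strongInduction with
  | _ U IH =>
    intro hU g f₀ hg
    obtain ⟨a, ha⟩ := hU
    by_cases hsing : U = {a}
    · subst hsing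
      refine ⟨g a ha, fun i hi => ?_, fun f' hf' => ?_⟩
      · rcases Finset.mem_singleton.1 hi with rfl
        rw [map_homOfLE_refl X _ _, Category.id_comp]
      · rw [← hf' a ha, map_homOfLE_refl X _ _, Category.id_comp]
    · have hsne : (U.erase a).Nonempty := by
        rw [Finset.nonempty_iff_ne_empty]
        intro h0
        apply hsing
        apply Finset.eq_singleton_iff_unique_mem.2
        refine ⟨ha, fun b hb => ?_⟩
        by_contra hba
        have : b ∈ U.erase a := Finset.mem_erase.2 ⟨hba, hb⟩
        rw [h0] at this
        exact absurd this (Finset.notMem_empty b)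
      obtain ⟨s, hs_ne, has, rfl⟩ : ∃ s : Finset (Fin n), s.Nonempty ∧ a ∉ s ∧
          U = insert a s :=
        ⟨U.erase a, hsne, Finset.notMem_erase a U, (Finset.insert_erase ha).symm⟩
      obtain ⟨fs, hfs, hfs_uniq⟩ := IH s (Finset.ssubset_insert has) hs_ne
        (fun i hi => g i (Finset.mem_insert_of_mem hi)) f₀
        (fun i hi => hg i (Finset.mem_insert_of_mem hi))
      have po : IsPushout (X.map (homOfLE (show (∅ : Finset (Fin n)) ≤ {a} from
            Finset.empty_subset _)))
          (X.map (homOfLE (Finset.empty_subset s)))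
          (X.map (homOfLE (show ({a} : Finset (Fin n)) ≤ insert a s from
            Finset.singleton_subset_iff.mpr (Finset.mem_insert_self a s))))
          (X.map (homOfLE (Finset.subset_insert a s))) := by
        refine isPushout_congr X rfl ?_ rfl ?_
          (pushout_rect X hX s ∅ (Finset.empty_subset s) a has)
        · simp
        · simp
      have hf0s : X.map (homOfLE (Finset.empty_subset s)) ≫ fs = f₀ := by
        obtain ⟨b, hb⟩ := hs_ne
        have hcomp : X.map (homOfLE (Finset.empty_subset s)) =
            X.map (homOfLE (Finset.empty_subset {b})) ≫
              X.map (homOfLE (Finset.singleton_subset_iff.mpr hb)) :=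
          (map_homOfLE_comp X _ _).symm
        rw [hcomp, Category.assoc, hfs b hb, hg b (Finset.mem_insert_of_mem hb)]
      have hcommpo : X.map (homOfLE (show (∅ : Finset (Fin n)) ≤ {a} from
            Finset.empty_subset _)) ≫ g a (Finset.mem_insert_self a s) =
          X.map (homOfLE (Finset.empty_subset s)) ≫ fs := by
        rw [hf0s, hg a (Finset.mem_insert_self a s)]
      refine ⟨po.desc (g a (Finset.mem_insert_self a s)) fs hcommpo,
        fun i hi => ?_, fun f' hf' => ?_⟩
      · rcases Finset.mem_insert.1 hi with rfl | hi'
        · exact po.inl_desc _ _ _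
        · have hcomp : X.map (homOfLE (Finset.singleton_subset_iff.mpr hi)) =
              X.map (homOfLE (Finset.singleton_subset_iff.mpr hi')) ≫
                X.map (homOfLE (Finset.subset_insert a s)) :=
            (map_homOfLE_comp X _ _).symm
          rw [hcomp, Category.assoc, po.inr_desc, hfs i hi']
      · apply po.hom_ext
        · rw [po.inl_desc]
          exact hf' a (Finset.mem_insert_self a s)
        · rw [po.inr_desc]
          apply hfs_uniq
          intro i hi
          have hcomp : X.map (homOfLE (Finset.singleton_subset_iff.mpr hi)) ≫
              X.map (homOfLE (Finset.subset_insert a s)) =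
              X.map (homOfLE (Finset.singleton_subset_iff.mpr
                (Finset.mem_insert_of_mem hi))) :=
            map_homOfLE_comp X _ _
          rw [← Category.assoc, hcomp]
          exact hf' i (Finset.mem_insert_of_mem hi)

end AuxHelpers


section KHelpers

variable (X : Finset (Fin n) ⥤ C)

/-- The canonical map `K ⟶ 𝒦(U)` hitting the `i`-th summand. -/
noncomputable def phi (U : Finset (Fin n)) (i : Fin n) : X.obj ∅ ⟶ (KF X).obj U :=
  eqToHom (show X.obj ∅ = sig X ∅ i by simp [sig]) ≫
    cmap X (Finset.empty_subset U) i ≫ Sigma.ι (fun j => sig X U j) i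


lemma phi_comp {U V : Finset (Fin n)} (h : U ≤ V) (i : Fin n) :
    phi X U i ≫ (KF X).map (homOfLE h) = phi X V i := by
  dsimp [phi, KF]
  erw [Category.assoc, Category.assoc, Sigma.ι_map]
  rw [← Category.assoc (cmap X _ i), cmap_trans]

lemma ι_kappa (U : Finset (Fin n)) (i : Fin n) :
    Sigma.ι (fun j => sig X U j) i ≫ (kappa X).app U = bmap X U i := by
  dsimp [kappa]
  simp

lemma phi_kappa (U : Finset (Fin n)) (i : Fin n) :
    phi X U i ≫ (kappa X).app U = X.map (homOfLE (Finset.empty_subset U)) := by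
  dsimp [phi]
  erw [Category.assoc, Category.assoc, ι_kappa, cmap_bmap]
  have : bmap X ∅ i = eqToHom (show sig X ∅ i = X.obj ∅ by simp [sig]) := by
    rw [bmap, dif_neg (Finset.notMem_empty i), map_homOfLE_refl X _ _, Category.comp_id]
  rw [this]
  simp
variable {c : C}

/-- The family of maps `X({i}) ⟶ c` extracted from a map `𝒦(U) ⟶ c`, for `i ∈ U`. -/
noncomputable def fam (U : Finset (Fin n)) (g : (KF X).obj U ⟶ c) (i : Fin n)
    (hi : i ∈ U) : X.obj {i} ⟶ c :=
  eqToHom (show X.obj {i} = sig X U i by simp [sig, hi]) ≫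
    Sigma.ι (fun j => sig X U j) i ≫ g

/-- A map `𝒦(U) ⟶ c` lies in the fiber over the diagonal at `f₀`. -/
def Ok (f₀ : X.obj ∅ ⟶ c) (U : Finset (Fin n)) (g : (KF X).obj U ⟶ c) : Prop :=
  ∀ i, phi X U i ≫ g = f₀

lemma ok_fam {f₀ : X.obj ∅ ⟶ c} {U : Finset (Fin n)} {g : (KF X).obj U ⟶ c}
    (h : Ok X f₀ U g) (i : Fin n) (hi : i ∈ U) :
    X.map (homOfLE (Finset.empty_subset {i})) ≫ fam X U g i hi = f₀ := by
  have hh := h i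
  rw [phi] at hh
  rw [cmap, dif_neg (Finset.notMem_empty i), dif_pos hi] at hh
  rw [fam]
  simp only [Category.assoc] at hh ⊢
  erw [Category.assoc, Category.assoc, Category.assoc] at hh
  simp at hh ⊢
  exact hh

lemma ok_notmem {f₀ : X.obj ∅ ⟶ c} {U : Finset (Fin n)} {g : (KF X).obj U ⟶ c}
    (h : Ok X f₀ U g) (i : Fin n) (hi : i ∉ U) :
    Sigma.ι (fun j => sig X U j) i ≫ g =
      eqToHom (show sig X U i = X.obj ∅ by simp [sig, hi]) ≫ f₀ := by
  have hh := h i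
  rw [phi] at hh
  rw [cmap, dif_neg (Finset.notMem_empty i), dif_neg hi] at hh
  rw [← hh]
  erw [Category.assoc, Category.assoc]
  simp
  rfl

lemma fam_map {U V : Finset (Fin n)} (h : V ≤ U) (g : (KF X).obj U ⟶ c)
    (i : Fin n) (hi : i ∈ V) :
    fam X V ((KF X).map (homOfLE h) ≫ g) i hi = fam X U g i (h hi) := by
  dsimp [fam, KF]
  erw [Sigma.ι_map_assoc]
  erw [← Category.assoc (cmap X _ i)]
  rw [show cmap X h i = eqToHom (by simp [sig, hi, h hi]) from dif_pos hi]
  erw [Category.assoc]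
  simp

lemma fam_kappa {U : Finset (Fin n)} (f : X.obj U ⟶ c) (i : Fin n) (hi : i ∈ U) :
    fam X U ((kappa X).app U ≫ f) i hi =
      X.map (homOfLE (Finset.singleton_subset_iff.mpr hi)) ≫ f := by
  dsimp [fam]
  erw [← Category.assoc, ← Category.assoc, Category.assoc _ _ ((kappa X).app U),
    ι_kappa, bmap, dif_pos hi]
  simp

end KHelpers


section ColimHelpers

variable (X : Finset (Fin n) ⥤ C) {c : C}

lemma exists_rep (Y : Finset (Fin n) ⥤ C) (x : (colimit (diag Y)).obj c) :
    ∃ (j : (D n)ᵒᵖ) (u : Y.obj j.unop.val ⟶ c),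
      (colimit.ι (diag Y) j).app c u = x := by
  obtain ⟨j, u, hu⟩ := Types.jointly_surjective'
    ((colimitObjIsoColimitCompEvaluation (diag Y) c).hom x)
  refine ⟨j, u, ?_⟩
  have h1 : (colimitObjIsoColimitCompEvaluation (diag Y) c).inv
      (colimit.ι (diag Y ⋙ (evaluation C Type).obj c) j u) =
      (colimit.ι (diag Y) j).app c u :=
    ConcreteCategory.congr_hom (colimitObjIsoColimitCompEvaluation_ι_inv (diag Y) j c) u
  rw [← h1, hu]
  exact ConcreteCategory.congr_hom ((colimitObjIsoColimitCompEvaluation (diag Y) c).hom_inv_id) x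

lemma ι_gap (Y : Finset (Fin n) ⥤ C) (j : (D n)ᵒᵖ) :
    colimit.ι (diag Y) j ≫ gap Y =
      coyoneda.map ((Y.map (homOfLE (Finset.empty_subset j.unop.val))).op) :=
  colimit.ι_desc _ _

lemma ι_topMap (j : (D n)ᵒᵖ) :
    colimit.ι (diag X) j ≫ topMap X =
      coyoneda.map (((kappa X).app j.unop.val).op) ≫ colimit.ι (diag (KF X)) j := by
  dsimp only [topMap]
  erw [ι_colimMap]
  rfl

lemma phi_zero (i : Fin n) :
    phi X ∅ i = eqToHom (show X.obj ∅ = sig X ∅ i by simp [sig]) ≫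
      Sigma.ι (fun j => sig X ∅ j) i := by
  rw [phi, cmap_refl]
  erw [Category.id_comp]
  rfl

lemma ι_wMap_π (j : (D n)ᵒᵖ) (i : Fin n) :
    colimit.ι (diag (KF X)) j ≫ wMap X ≫ Pi.π _ i =
      coyoneda.map (phi X j.unop.val i).op := by
  dsimp only [wMap]
  simp only [Category.assoc]
  rw [show cmp X ≫ Pi.π _ i = coyoneda.map ((eqToHom
      (show X.obj ∅ = sig X ∅ i by simp [sig]) ≫
        Sigma.ι (fun j => sig X ∅ j) i).op) from Pi.lift_π _ _]
  erw [← Category.assoc, ι_gap, ← Functor.map_comp, ← op_comp]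
  have : (eqToHom (show X.obj ∅ = sig X ∅ i by simp [sig]) ≫
      Sigma.ι (fun j => sig X ∅ j) i) ≫
      (KF X).map (homOfLE (Finset.empty_subset j.unop.val)) = phi X j.unop.val i := by
    rw [← phi_comp X (Finset.empty_subset j.unop.val) i, phi_zero]
    rfl
  erw [this]

lemma diagMap_π (i : Fin n) :
    diagMap X ≫ Pi.π (fun _ : Fin n => coyoneda.obj (op (X.obj ∅))) i = 𝟙 _ :=
  Pi.lift_π _ _

end ColimHelpers


section DescHelpers

variable (X : Finset (Fin n) ⥤ C)

variable (hX : ∀ (U : Finset (Fin n)) (i j : Fin n), i ≠ j → i ∉ U → j ∉ U →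
  IsPushout (X.map (homOfLE (Finset.subset_insert i U)))
    (X.map (homOfLE (Finset.subset_insert j U)))
    (X.map (homOfLE (Finset.subset_insert j (insert i U))))
    (X.map (homOfLE (Finset.insert_subset_insert j (Finset.subset_insert i U)))))

variable {c : C}

/-- The distinguished descent of a fiber element `g : 𝒦(U) ⟶ c` to `X(U) ⟶ c`. -/
noncomputable def descOf (f₀ : X.obj ∅ ⟶ c) (U : Finset (Fin n)) (hU : U.Nonempty)
    (g : (KF X).obj U ⟶ c) (h : Ok X f₀ U g) : X.obj U ⟶ c :=
  (exists_unique_desc X hX U hU (fam X U g) f₀ (fun i hi => ok_fam X h i hi)).choose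

lemma descOf_spec (f₀ : X.obj ∅ ⟶ c) (U : Finset (Fin n)) (hU : U.Nonempty)
    (g : (KF X).obj U ⟶ c) (h : Ok X f₀ U g) (i : Fin n) (hi : i ∈ U) :
    X.map (homOfLE (Finset.singleton_subset_iff.mpr hi)) ≫
      descOf X hX f₀ U hU g h = fam X U g i hi :=
  (exists_unique_desc X hX U hU (fam X U g) f₀
    (fun i hi => ok_fam X h i hi)).choose_spec.1 i hi

lemma descOf_uniq (f₀ : X.obj ∅ ⟶ c) (U : Finset (Fin n)) (hU : U.Nonempty)
    (g : (KF X).obj U ⟶ c) (h : Ok X f₀ U g) (f : X.obj U ⟶ c)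
    (hf : ∀ i (hi : i ∈ U), X.map (homOfLE (Finset.singleton_subset_iff.mpr hi)) ≫ f =
      fam X U g i hi) : f = descOf X hX f₀ U hU g h :=
  (exists_unique_desc X hX U hU (fam X U g) f₀
    (fun i hi => ok_fam X h i hi)).choose_spec.2 f hf

lemma descOf_gap (f₀ : X.obj ∅ ⟶ c) (U : Finset (Fin n)) (hU : U.Nonempty)
    (g : (KF X).obj U ⟶ c) (h : Ok X f₀ U g) :
    X.map (homOfLE (Finset.empty_subset U)) ≫ descOf X hX f₀ U hU g h = f₀ := by
  obtain ⟨b, hb⟩ := hU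
  rw [show X.map (homOfLE (Finset.empty_subset U)) =
      X.map (homOfLE (Finset.empty_subset {b})) ≫
        X.map (homOfLE (Finset.singleton_subset_iff.mpr hb)) from
    (map_homOfLE_comp X _ _).symm]
  erw [Category.assoc, descOf_spec (hi := hb), ok_fam X h b hb]

lemma descOf_kappa (f₀ : X.obj ∅ ⟶ c) (U : Finset (Fin n)) (hU : U.Nonempty)
    (g : (KF X).obj U ⟶ c) (h : Ok X f₀ U g) :
    (kappa X).app U ≫ descOf X hX f₀ U hU g h = g := by
  apply Sigma.hom_ext
  intro i
  erw [← Category.assoc, ι_kappa]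
  by_cases hi : i ∈ U
  · rw [bmap, dif_pos hi, Category.assoc, descOf_spec X hX f₀ U hU g h i hi, fam]
    simp
  · rw [bmap, dif_neg hi, Category.assoc, descOf_gap, ok_notmem X h i hi]

lemma descOf_eq (f₀ : X.obj ∅ ⟶ c) (U : Finset (Fin n)) (hU : U.Nonempty)
    (f : X.obj U ⟶ c) (h : Ok X f₀ U ((kappa X).app U ≫ f)) :
    descOf X hX f₀ U hU ((kappa X).app U ≫ f) h = f :=
  (descOf_uniq X hX f₀ U hU _ h f (fun i hi => by rw [fam_kappa])).symm

open scoped Classical in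
/-- The retraction invariant used to prove injectivity. -/
noncomputable def R (f₀ : X.obj ∅ ⟶ c)
    (p : Σ V : (D n)ᵒᵖ, (diag (KF X) ⋙ (evaluation C Type).obj c).obj V) :
    Option (colimit (diag X ⋙ (evaluation C Type).obj c)) :=
  if h : Ok X f₀ p.1.unop.val p.2 then
    some (colimit.ι (diag X ⋙ (evaluation C Type).obj c) p.1
      (descOf X hX f₀ p.1.unop.val p.1.unop.2 p.2 h))
  else none

lemma R_rel (f₀ : X.obj ∅ ⟶ c) {p q}
    (hpq : (diag (KF X) ⋙ (evaluation C Type).obj c).ColimitTypeRel p q) :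
    R X hX f₀ p = R X hX f₀ q := by
  obtain ⟨f, hf⟩ := hpq
  have hVU : q.1.unop.val ≤ p.1.unop.val := leOfHom f.unop
  have hq2 : q.2 = (KF X).map (homOfLE hVU) ≫ p.2 := hf
  have hOk : ∀ i, phi X q.1.unop.val i ≫ q.2 = phi X p.1.unop.val i ≫ p.2 := by
    intro i
    erw [hq2, ← Category.assoc, phi_comp]
  by_cases h : Ok X f₀ p.1.unop.val p.2
  · have hq : Ok X f₀ q.1.unop.val q.2 := fun i => (hOk i).trans (h i)
    rw [R, dif_pos h, R, dif_pos hq]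
    have hdesc : descOf X hX f₀ q.1.unop.val q.1.unop.2 q.2 hq =
        X.map (homOfLE hVU) ≫ descOf X hX f₀ p.1.unop.val p.1.unop.2 p.2 h := by
      refine (descOf_uniq X hX f₀ _ _ _ _ _ (fun i hi => ?_)).symm
      erw [← Category.assoc, map_homOfLE_comp, descOf_spec, hq2, fam_map]
    congr 1
    have hw : colimit.ι (diag X ⋙ (evaluation C Type).obj c) q.1
        ((diag X ⋙ (evaluation C Type).obj c).map f
          (descOf X hX f₀ p.1.unop.val p.1.unop.2 p.2 h)) =
        colimit.ι (diag X ⋙ (evaluation C Type).obj c) p.1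
          (descOf X hX f₀ p.1.unop.val p.1.unop.2 p.2 h) :=
      ConcreteCategory.congr_hom (colimit.w (diag X ⋙ (evaluation C Type).obj c) f) _
    rw [← hw]
    exact congrArg (colimit.ι (diag X ⋙ (evaluation C Type).obj c) q.1) hdesc.symm
  · have hq : ¬ Ok X f₀ q.1.unop.val q.2 := fun hq => h (fun i => ((hOk i).symm.trans (hq i)))
    rw [R, dif_neg h, R, dif_neg hq]

lemma R_eqv (f₀ : X.obj ∅ ⟶ c) {p q}
    (h : Relation.EqvGen
      ((diag (KF X) ⋙ (evaluation C Type).obj c).ColimitTypeRel) p q) :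
    R X hX f₀ p = R X hX f₀ q := by
  induction h with
  | rel _ _ hr => exact R_rel X hX f₀ hr
  | refl _ => rfl
  | symm _ _ _ ih => exact ih.symm
  | trans _ _ _ _ _ ih₁ ih₂ => exact ih₁.trans ih₂

end DescHelpers

/-- For a strongly cocartesian `n`-cube `X` in a small category `C` with
finite coproducts, the square in `[C, Type]` whose vertical maps are the cocartesian gap maps
`γ^X : colim_{∅ ≠ U} y(X(U)) ⟶ y(K)` and `w^X : colim_{∅ ≠ U} y(𝒦(U)) ⟶ y(K)^{× n}`, whose
top map is induced by the comparisons `y(κ_U)`, and whose bottom map is the `n`-fold diagonal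
`Δ : y(K) ⟶ y(K)^{× n}`, is a pullback square. -/
theorem goodwillie_stmt_16 (X : Finset (Fin n) ⥤ C)
    (hX : ∀ (U : Finset (Fin n)) (i j : Fin n), i ≠ j → i ∉ U → j ∉ U →
      IsPushout (X.map (homOfLE (Finset.subset_insert i U)))
        (X.map (homOfLE (Finset.subset_insert j U)))
        (X.map (homOfLE (Finset.subset_insert j (insert i U))))
        (X.map (homOfLE (Finset.insert_subset_insert j (Finset.subset_insert i U))))) :
    IsPullback (topMap X) (gap X) (wMap X) (diagMap X) := by
  have comm : topMap X ≫ wMap X = gap X ≫ diagMap X := by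
    apply colimit.hom_ext
    intro j
    apply Pi.hom_ext
    intro i
    simp only [Category.assoc]
    rw [diagMap_π, Category.comp_id, ι_gap]
    rw [← Category.assoc (colimit.ι (diag X) j), ι_topMap]
    erw [Category.assoc]
    exact (congrArg (coyoneda.map ((kappa X).app j.unop.val).op ≫ ·) (ι_wMap_π X j i)).trans
      (by rw [← Functor.map_comp, ← op_comp, phi_kappa])
  refine IsPullback.of_isLimit' ⟨comm⟩ ?_
  apply evaluationJointlyReflectsLimits
  intro c
  refine (isLimitMapConePullbackConeEquiv ((evaluation C Type).obj c) comm).symm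
    ((PullbackCone.isLimitEquivBijective _).symm ?_)
  constructor
  · -- injectivity
    intro x y hxy
    obtain ⟨jx, u, rfl⟩ := exists_rep X x
    obtain ⟨jy, v, rfl⟩ := exists_rep X y
    have h1 : (topMap X).app c ((colimit.ι (diag X) jx).app c u) =
        (topMap X).app c ((colimit.ι (diag X) jy).app c v) :=
      congrArg (fun t => t.1.1) hxy
    have h2 : (gap X).app c ((colimit.ι (diag X) jx).app c u) =
        (gap X).app c ((colimit.ι (diag X) jy).app c v) :=
      congrArg (fun t => t.1.2) hxy
    have g1 : (gap X).app c ((colimit.ι (diag X) jx).app c u) =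
        X.map (homOfLE (Finset.empty_subset jx.unop.val)) ≫ u :=
      ConcreteCategory.congr_hom (NatTrans.congr_app (ι_gap X jx) c) u
    have g2 : (gap X).app c ((colimit.ι (diag X) jy).app c v) =
        X.map (homOfLE (Finset.empty_subset jy.unop.val)) ≫ v :=
      ConcreteCategory.congr_hom (NatTrans.congr_app (ι_gap X jy) c) v
    set f₀ : X.obj ∅ ⟶ c := X.map (homOfLE (Finset.empty_subset jx.unop.val)) ≫ u
      with hf₀
    have t1 : (topMap X).app c ((colimit.ι (diag X) jx).app c u) =
        (colimit.ι (diag (KF X)) jx).app c ((kappa X).app jx.unop.val ≫ u) :=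
      ConcreteCategory.congr_hom (NatTrans.congr_app (ι_topMap X jx) c) u
    have t2 : (topMap X).app c ((colimit.ι (diag X) jy).app c v) =
        (colimit.ι (diag (KF X)) jy).app c ((kappa X).app jy.unop.val ≫ v) :=
      ConcreteCategory.congr_hom (NatTrans.congr_app (ι_topMap X jy) c) v
    have h1' : (colimit.ι (diag (KF X)) jx).app c ((kappa X).app jx.unop.val ≫ u) =
        (colimit.ι (diag (KF X)) jy).app c ((kappa X).app jy.unop.val ≫ v) := by
      rw [← t1, ← t2, h1]
    have h1'' : colimit.ι (diag (KF X) ⋙ (evaluation C Type).obj c) jx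
        ((kappa X).app jx.unop.val ≫ u) =
        colimit.ι (diag (KF X) ⋙ (evaluation C Type).obj c) jy
        ((kappa X).app jy.unop.val ≫ v) := by
      calc colimit.ι (diag (KF X) ⋙ (evaluation C Type).obj c) jx
            ((kappa X).app jx.unop.val ≫ u)
          = (colimitObjIsoColimitCompEvaluation (diag (KF X)) c).hom
              ((colimit.ι (diag (KF X)) jx).app c ((kappa X).app jx.unop.val ≫ u)) :=
            (ConcreteCategory.congr_hom (colimitObjIsoColimitCompEvaluation_ι_app_hom
              (diag (KF X)) jx c) _).symm
        _ = (colimitObjIsoColimitCompEvaluation (diag (KF X)) c).hom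
              ((colimit.ι (diag (KF X)) jy).app c ((kappa X).app jy.unop.val ≫ v)) :=
            congrArg _ h1'
        _ = colimit.ι (diag (KF X) ⋙ (evaluation C Type).obj c) jy
              ((kappa X).app jy.unop.val ≫ v) :=
            ConcreteCategory.congr_hom (colimitObjIsoColimitCompEvaluation_ι_app_hom
              (diag (KF X)) jy c) _
    have hEq := Types.colimit_eq h1''
    have hOkx : Ok X f₀ jx.unop.val ((kappa X).app jx.unop.val ≫ u) := by
      intro i
      rw [← Category.assoc, phi_kappa]
    have hOky : Ok X f₀ jy.unop.val ((kappa X).app jy.unop.val ≫ v) := by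
      intro i
      rw [← Category.assoc, phi_kappa]
      exact g2.symm.trans (h2.symm.trans g1)
    have hR := R_eqv X hX f₀
      (p := ⟨jx, (kappa X).app jx.unop.val ≫ u⟩)
      (q := ⟨jy, (kappa X).app jy.unop.val ≫ v⟩) hEq
    simp only [R] at hR
    erw [dif_pos hOkx, dif_pos hOky] at hR
    erw [descOf_eq X hX f₀ jx.unop.val jx.unop.2 u hOkx,
      descOf_eq X hX f₀ jy.unop.val jy.unop.2 v hOky] at hR
    have hfin := Option.some.inj hR
    calc (colimit.ι (diag X) jx).app c u
        = (colimitObjIsoColimitCompEvaluation (diag X) c).inv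
            (colimit.ι (diag X ⋙ (evaluation C Type).obj c) jx u) :=
          (ConcreteCategory.congr_hom (colimitObjIsoColimitCompEvaluation_ι_inv (diag X) jx c) u).symm
      _ = (colimitObjIsoColimitCompEvaluation (diag X) c).inv
            (colimit.ι (diag X ⋙ (evaluation C Type).obj c) jy v) :=
          congrArg _ hfin
      _ = (colimit.ι (diag X) jy).app c v :=
          ConcreteCategory.congr_hom (colimitObjIsoColimitCompEvaluation_ι_inv (diag X) jy c) v
  · -- surjectivity
    rintro ⟨⟨b, f₀⟩, hcond⟩
    obtain ⟨jv, g, rfl⟩ := exists_rep (KF X) b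
    have hcond' : (wMap X).app c ((colimit.ι (diag (KF X)) jv).app c g) =
        (diagMap X).app c f₀ := hcond
    have hOk : Ok X f₀ jv.unop.val g := by
      intro i
      have hw := ConcreteCategory.congr_hom (NatTrans.congr_app (ι_wMap_π X jv i) c) g
      have hd := ConcreteCategory.congr_hom (NatTrans.congr_app (diagMap_π X i) c) f₀
      calc phi X jv.unop.val i ≫ g
          = (Pi.π (fun _ : Fin n => coyoneda.obj (op (X.obj ∅))) i).app c
              ((wMap X).app c ((colimit.ι (diag (KF X)) jv).app c g)) := hw.symm
        _ = (Pi.π (fun _ : Fin n => coyoneda.obj (op (X.obj ∅))) i).app c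
              ((diagMap X).app c f₀) := by rw [hcond']
        _ = f₀ := hd
    refine ⟨(colimit.ι (diag X) jv).app c
      (descOf X hX f₀ jv.unop.val jv.unop.2 g hOk), ?_⟩
    apply Subtype.ext
    refine Prod.ext ?_ ?_
    · show (topMap X).app c _ = (colimit.ι (diag (KF X)) jv).app c g
      calc (topMap X).app c ((colimit.ι (diag X) jv).app c
            (descOf X hX f₀ jv.unop.val jv.unop.2 g hOk))
          = (colimit.ι (diag (KF X)) jv).app c ((kappa X).app jv.unop.val ≫
              descOf X hX f₀ jv.unop.val jv.unop.2 g hOk) :=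
            ConcreteCategory.congr_hom (NatTrans.congr_app (ι_topMap X jv) c) _
        _ = (colimit.ι (diag (KF X)) jv).app c g := by
            erw [descOf_kappa]
    · show (gap X).app c _ = f₀
      calc (gap X).app c ((colimit.ι (diag X) jv).app c
            (descOf X hX f₀ jv.unop.val jv.unop.2 g hOk))
          = X.map (homOfLE (Finset.empty_subset jv.unop.val)) ≫
              descOf X hX f₀ jv.unop.val jv.unop.2 g hOk :=
            ConcreteCategory.congr_hom (NatTrans.congr_app (ι_gap X jv) c) _
        _ = f₀ := descOf_gap X hX f₀ jv.unop.val jv.unop.2 g hOk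

end GoodwillieStmt16
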